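/- arXiv:2504.06685 — 7 statements merged into one kernel-verified Lean document; each statement's English description precedes it below -/
import Mathlib

section
/- Let (Ω, 𝓕, P) be a probability space, M ≥ 1 a natural number, and T_0, T_1, …, T_M : Ω → ℝ measurable random variables that are exchangeable, meaning that for every permutation σ of {0,1,…,M} the pushforward of P under ω ↦ (T_{σ(0)}(ω), …, T_{σ(M)}(ω)) equals the pushforward of P under ω ↦ (T_0(ω), …, T_M(ω)) as measures on Fin (M+1) → ℝ. Define pVal(ω) = (1 + #{m ∈ {1,…,M} : T_m(ω) ≥ T_0(ω)})/(M+1). Then for every α ∈ (0,1), P({ω : pVal(ω) ≤ α}) ≤ α. -/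
open MeasureTheory Finset
open scoped ENNReal

private noncomputable def cnt (M : ℕ) (i : Fin (M + 1)) (x : Fin (M + 1) → ℝ) : ℕ :=
  (Finset.univ.filter (fun m => x i ≤ x m)).card

private lemma cnt_zero_eq (M : ℕ) (x : Fin (M + 1) → ℝ) :
    cnt M 0 x = 1 + (Finset.univ.filter (fun m => m ≠ 0 ∧ x 0 ≤ x m)).card := by
  have h : (Finset.univ.filter (fun m => x 0 ≤ x m)) =
      insert (0 : Fin (M + 1)) (Finset.univ.filter (fun m => m ≠ 0 ∧ x 0 ≤ x m)) := by
    ext m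
    simp only [mem_filter, mem_univ, true_and, mem_insert]
    constructor
    · intro h
      by_cases hm : m = 0
      · exact Or.inl hm
      · exact Or.inr ⟨hm, h⟩
    · rintro (rfl | ⟨-, h⟩)
      · exact le_refl _
      · exact h
  rw [cnt, h, card_insert_of_notMem (by simp)]
  omega

private lemma cnt_det (M : ℕ) (β : ℝ) (hβ : 0 ≤ β) (x : Fin (M + 1) → ℝ) :
    ((Finset.univ.filter (fun i => (cnt M i x : ℝ) ≤ β)).card : ℝ) ≤ β := by
  set S := Finset.univ.filter (fun i => (cnt M i x : ℝ) ≤ β) with hS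
  rcases S.eq_empty_or_nonempty with h | h
  · simp [h, hβ]
  · obtain ⟨i, hiS, hmin⟩ := S.exists_min_image x h
    have hsub : S ⊆ Finset.univ.filter (fun m => x i ≤ x m) := by
      intro j hj
      simp only [mem_filter, mem_univ, true_and]
      exact hmin j hj
    have h1 : (S.card : ℝ) ≤ (cnt M i x : ℝ) := by
      exact_mod_cast Finset.card_le_card hsub
    have h2 : (cnt M i x : ℝ) ≤ β := by
      have := mem_filter.mp hiS
      exact this.2
    linarith

private lemma cnt_comp (M : ℕ) (σ : Equiv.Perm (Fin (M + 1))) (i : Fin (M + 1))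
    (x : Fin (M + 1) → ℝ) :
    cnt M i (fun m => x (σ m)) = cnt M (σ i) x := by
  unfold cnt
  apply Finset.card_bij (fun m _ => σ m)
  · intro a ha
    simp only [mem_filter, mem_univ, true_and] at ha ⊢
    exact ha
  · intro a _ b _ hab
    exact σ.injective hab
  · intro b hb
    refine ⟨σ.symm b, ?_, by simp⟩
    simp only [mem_filter, mem_univ, true_and] at hb ⊢
    simpa using hb

private lemma meas_cnt (M : ℕ) (i : Fin (M + 1)) :
    Measurable (fun x : Fin (M + 1) → ℝ => (cnt M i x : ℝ)) := by
  have h : (fun x : Fin (M + 1) → ℝ => (cnt M i x : ℝ)) =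
      fun x => ∑ m : Fin (M + 1), if x i ≤ x m then (1 : ℝ) else 0 := by
    funext x
    rw [cnt, Finset.card_filter]
    push_cast
    rfl
  rw [h]
  exact Finset.measurable_sum _ fun m _ =>
    Measurable.ite (measurableSet_le (measurable_pi_apply i) (measurable_pi_apply m))
      measurable_const measurable_const

theorem stmt_1 {Ω : Type*} [MeasurableSpace Ω] (P : Measure Ω) [IsProbabilityMeasure P]
    (M : ℕ) (hM : 1 ≤ M) (T : Fin (M + 1) → Ω → ℝ) (hT : ∀ i, Measurable (T i))
    (hexch : ∀ σ : Equiv.Perm (Fin (M + 1)),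
      P.map (fun ω => fun i => T (σ i) ω) = P.map (fun ω => fun i => T i ω))
    (α : ℝ) (hα : α ∈ Set.Ioo (0 : ℝ) 1) :
    P {ω | ((1 : ℝ) + ((Finset.univ : Finset (Fin (M + 1))).filter
        (fun m => m ≠ 0 ∧ T 0 ω ≤ T m ω)).card) / (M + 1) ≤ α}
      ≤ ENNReal.ofReal α := by
  obtain ⟨hα0, hα1⟩ := hα
  set β : ℝ := α * ((M : ℝ) + 1) with hβdef
  have hMpos : (0 : ℝ) < (M : ℝ) + 1 := by positivity
  have hβ0 : 0 ≤ β := by positivity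
  -- measurable map
  have hTm : Measurable (fun ω => fun m => T m ω) := measurable_pi_lambda _ hT
  -- measurable sets in the target space
  set B : Fin (M + 1) → Set (Fin (M + 1) → ℝ) :=
    fun i => {x | (cnt M i x : ℝ) ≤ β} with hBdef
  have hB : ∀ i, MeasurableSet (B i) := fun i =>
    measurableSet_le (meas_cnt M i) measurable_const
  set A : Fin (M + 1) → Set Ω := fun i => (fun ω => fun m => T m ω) ⁻¹' B i with hAdef
  have hAmeas : ∀ i, MeasurableSet (A i) := fun i => hTm (hB i)
  -- the target set is A 0
  have hset : {ω | ((1 : ℝ) + ((Finset.univ : Finset (Fin (M + 1))).filter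
      (fun m => m ≠ 0 ∧ T 0 ω ≤ T m ω)).card) / (M + 1) ≤ α} = A 0 := by
    ext ω
    simp only [hAdef, hBdef, Set.mem_preimage, Set.mem_setOf_eq]
    rw [div_le_iff₀ hMpos, cnt_zero_eq]
    push_cast
    constructor <;> intro h <;> linarith
  rw [hset]
  -- all A i have the same measure
  have hAeq : ∀ i, P (A i) = P (A 0) := by
    intro i
    have h := hexch (Equiv.swap 0 i)
    have hσm : Measurable (fun ω => fun m => T (Equiv.swap 0 i m) ω) :=
      measurable_pi_lambda _ fun m => hT _
    have h1 : P.map (fun ω => fun m => T (Equiv.swap 0 i m) ω) (B 0)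
        = P.map (fun ω => fun m => T m ω) (B 0) := by rw [h]
    rw [Measure.map_apply hσm (hB 0), Measure.map_apply hTm (hB 0)] at h1
    have hpre : (fun ω => fun m => T (Equiv.swap 0 i m) ω) ⁻¹' B 0 = A i := by
      ext ω
      simp only [hAdef, hBdef, Set.mem_preimage, Set.mem_setOf_eq]
      have := cnt_comp M (Equiv.swap 0 i) 0 (fun m => T m ω)
      rw [this, Equiv.swap_apply_left]
    rw [hpre] at h1
    exact h1
  -- sum of measures as an integral of a count
  have hsum : ∑ i : Fin (M + 1), P (A i)
      = ∫⁻ ω, ((Finset.univ.filter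
          (fun i => (cnt M i (fun m => T m ω) : ℝ) ≤ β)).card : ℝ≥0∞) ∂P := by
    have h1 : ∀ i : Fin (M + 1),
        P (A i) = ∫⁻ ω, (A i).indicator (fun _ => (1 : ℝ≥0∞)) ω ∂P := by
      intro i
      exact (lintegral_indicator_one (hAmeas i)).symm
    simp_rw [h1]
    rw [← lintegral_finset_sum]
    · congr 1
      funext ω
      have : ∀ i : Fin (M + 1),
          (A i).indicator (fun _ => (1 : ℝ≥0∞)) ω
            = if (cnt M i (fun m => T m ω) : ℝ) ≤ β then (1 : ℝ≥0∞) else 0 := by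
        intro i
        by_cases hmem : (cnt M i (fun m => T m ω) : ℝ) ≤ β
        · rw [if_pos hmem, Set.indicator_of_mem]
          exact hmem
        · rw [if_neg hmem, Set.indicator_of_notMem]
          exact hmem
      simp_rw [this]
      rw [Finset.sum_boole]
    · intro i _
      exact (measurable_const.indicator (hAmeas i))
  -- bound the integrand
  have hbound : ∫⁻ ω, ((Finset.univ.filter
      (fun i => (cnt M i (fun m => T m ω) : ℝ) ≤ β)).card : ℝ≥0∞) ∂P
      ≤ ENNReal.ofReal β := by
    calc ∫⁻ ω, ((Finset.univ.filter
        (fun i => (cnt M i (fun m => T m ω) : ℝ) ≤ β)).card : ℝ≥0∞) ∂P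
        ≤ ∫⁻ _, ENNReal.ofReal β ∂P := by
          apply lintegral_mono
          intro ω
          dsimp only
          have := cnt_det M β hβ0 (fun m => T m ω)
          rw [← ENNReal.ofReal_natCast]
          exact ENNReal.ofReal_le_ofReal this
      _ = ENNReal.ofReal β := by simp
  have hsum' : ∑ i : Fin (M + 1), P (A i) = ((M : ℝ≥0∞) + 1) * P (A 0) := by
    rw [Finset.sum_congr rfl (fun i _ => hAeq i), Finset.sum_const]
    simp only [Finset.card_univ, Fintype.card_fin, nsmul_eq_mul]
    push_cast
    ring
  rw [hsum'] at hsum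
  have hfinal : ((M : ℝ≥0∞) + 1) * P (A 0) ≤ ((M : ℝ≥0∞) + 1) * ENNReal.ofReal α := by
    rw [hsum]
    refine hbound.trans_eq ?_
    rw [hβdef, ENNReal.ofReal_mul hα0.le, mul_comm]
    congr 1
    rw [show ((M : ℝ) + 1) = ((M + 1 : ℕ) : ℝ) by push_cast; ring, ENNReal.ofReal_natCast]
    push_cast
    ring
  have hne0 : ((M : ℝ≥0∞) + 1) ≠ 0 := by simp
  have hneTop : ((M : ℝ≥0∞) + 1) ≠ ⊤ := by
    simp [ENNReal.add_ne_top]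
  exact (ENNReal.mul_le_mul_iff_right hne0 hneTop).mp hfinal
end

section
/- Let n, s, t, m, r be natural numbers. Let X_S be an n×s real matrix such that the s×s matrix X_Sᵀ·X_S is invertible, and let X_T be an n×t real matrix. Let P_R be an m×n real matrix with P_R·P_Rᵀ = I_m and P_Rᵀ·P_R = I_n − X_S·(X_SᵀX_S)⁻¹·X_Sᵀ. Let U be an m×r real matrix with Uᵀ·U = I_r, and let Q be an r×t real matrix with Qᵀ·Q = X_Tᵀ·P_Rᵀ·P_R·X_T. Define X̃_T = X_S·(X_SᵀX_S)⁻¹·X_Sᵀ·X_T + P_Rᵀ·U·Q. Then X̃_Tᵀ·X_S = X_Tᵀ·X_S. -/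
/-!
The copy differs from `X_T` in the projection `H X_T` onto the column span of `X_S`, which is
symmetric and fixes `X_S`, and in the term `P_Rᵀ U Q`, which is orthogonal to `X_S`:
`(P_R X_S)ᵀ (P_R X_S) = X_Sᵀ (I - H) X_S = 0` forces `P_R X_S = 0`.
-/

namespace Matrix

variable {ι κ μ : Type*} [Fintype ι] [Fintype κ] [DecidableEq κ]

noncomputable def hatMatrix {R : Type*} [CommRing R] (X : Matrix ι κ R) : Matrix ι ι R :=
  X * (Xᵀ * X)⁻¹ * Xᵀ

section CommRing

variable {R : Type*} [CommRing R]

theorem isSymm_hatMatrix (X : Matrix ι κ R) : (hatMatrix X).IsSymm := by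
  have hsymm : ((Xᵀ * X)⁻¹)ᵀ = (Xᵀ * X)⁻¹ := by
    rw [transpose_nonsing_inv, transpose_mul, transpose_transpose]
  rw [IsSymm, hatMatrix, transpose_mul, transpose_mul, transpose_transpose, hsymm,
    Matrix.mul_assoc]

theorem hatMatrix_mul_self {X : Matrix ι κ R} (hX : IsUnit (Xᵀ * X)) : hatMatrix X * X = X := by
  rw [hatMatrix, Matrix.mul_assoc, nonsing_inv_mul_cancel_right _ _
    ((isUnit_iff_isUnit_det _).mp hX)]

theorem transpose_hatMatrix_mul_mul {X : Matrix ι κ R} (hX : IsUnit (Xᵀ * X))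
    (Y : Matrix ι μ R) : (hatMatrix X * Y)ᵀ * X = Yᵀ * X := by
  rw [transpose_mul, (isSymm_hatMatrix X).eq, Matrix.mul_assoc, hatMatrix_mul_self hX]

theorem transpose_mul_one_sub_hatMatrix_mul_self [DecidableEq ι] {X : Matrix ι κ R}
    (hX : IsUnit (Xᵀ * X)) :
    Xᵀ * (1 - hatMatrix X) * X = 0 := by
  rw [Matrix.mul_sub, Matrix.sub_mul, Matrix.mul_one, Matrix.mul_assoc, hatMatrix_mul_self hX,
    sub_self]

end CommRing

theorem mul_eq_zero_of_transpose_mul_self_eq_one_sub_hatMatrix [DecidableEq ι] [Fintype μ]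
    {X : Matrix ι κ ℝ} (hX : IsUnit (Xᵀ * X)) {P : Matrix μ ι ℝ}
    (hP : Pᵀ * P = 1 - hatMatrix X) : P * X = 0 := by
  have hgram : (P * X)ᴴ * (P * X) = 0 := by
    rw [conjTranspose_eq_transpose_of_trivial, transpose_mul, Matrix.mul_assoc,
      ← Matrix.mul_assoc Pᵀ, hP, ← Matrix.mul_assoc]
    exact transpose_mul_one_sub_hatMatrix_mul_self hX
  exact conjTranspose_mul_self_eq_zero.mp hgram

end Matrix

open Matrix

theorem stmt_4_general (n s t m r : ℕ)
    (XS : Matrix (Fin n) (Fin s) ℝ) (XT : Matrix (Fin n) (Fin t) ℝ)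
    (hXS : IsUnit (XSᵀ * XS))
    (PR : Matrix (Fin m) (Fin n) ℝ)
    (hP2 : PRᵀ * PR = 1 - XS * (XSᵀ * XS)⁻¹ * XSᵀ)
    (U : Matrix (Fin m) (Fin r) ℝ)
    (Q : Matrix (Fin r) (Fin t) ℝ) :
    (XS * (XSᵀ * XS)⁻¹ * XSᵀ * XT + PRᵀ * U * Q)ᵀ * XS = XTᵀ * XS := by
  change (hatMatrix XS * XT + PRᵀ * U * Q)ᵀ * XS = XTᵀ * XS
  have hPXS : PR * XS = 0 := mul_eq_zero_of_transpose_mul_self_eq_one_sub_hatMatrix hXS hP2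
  have hnoise : (PRᵀ * U * Q)ᵀ * XS = 0 := by
    rw [transpose_mul, transpose_mul, transpose_transpose, Matrix.mul_assoc, Matrix.mul_assoc,
      hPXS, Matrix.mul_zero, Matrix.mul_zero]
  rw [transpose_add, Matrix.add_mul, transpose_hatMatrix_mul_mul hXS, hnoise, add_zero]

theorem stmt_4 (n s t m r : ℕ)
    (XS : Matrix (Fin n) (Fin s) ℝ) (XT : Matrix (Fin n) (Fin t) ℝ)
    (hXS : IsUnit (XSᵀ * XS))
    (PR : Matrix (Fin m) (Fin n) ℝ)
    (hP1 : PR * PRᵀ = 1)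
    (hP2 : PRᵀ * PR = 1 - XS * (XSᵀ * XS)⁻¹ * XSᵀ)
    (U : Matrix (Fin m) (Fin r) ℝ) (hU : Uᵀ * U = 1)
    (Q : Matrix (Fin r) (Fin t) ℝ) (hQ : Qᵀ * Q = XTᵀ * PRᵀ * PR * XT) :
    (XS * (XSᵀ * XS)⁻¹ * XSᵀ * XT + PRᵀ * U * Q)ᵀ * XS = XTᵀ * XS :=
  stmt_4_general n s t m r XS XT hXS PR hP2 U Q
end

section
/- Let n, s, t, m, r be natural numbers. Let X_S be an n×s real matrix such that the s×s matrix X_Sᵀ·X_S is invertible, and let X_T be an n×t real matrix. Let P_R be an m×n real matrix with P_R·P_Rᵀ = I_m and P_Rᵀ·P_R = I_n − X_S·(X_SᵀX_S)⁻¹·X_Sᵀ. Let U be an m×r real matrix with Uᵀ·U = I_r, and let Q be an r×t real matrix with Qᵀ·Q = X_Tᵀ·P_Rᵀ·P_R·X_T. Define X̃_T = X_S·(X_SᵀX_S)⁻¹·X_Sᵀ·X_T + P_Rᵀ·U·Q. Then X̃_Tᵀ·X̃_T = X_Tᵀ·X_T. -/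
open Matrix

theorem stmt_5 (n s t m r : ℕ)
    (XS : Matrix (Fin n) (Fin s) ℝ) (XT : Matrix (Fin n) (Fin t) ℝ)
    (hXS : IsUnit (XSᵀ * XS))
    (PR : Matrix (Fin m) (Fin n) ℝ)
    (hP1 : PR * PRᵀ = 1)
    (hP2 : PRᵀ * PR = 1 - XS * (XSᵀ * XS)⁻¹ * XSᵀ)
    (U : Matrix (Fin m) (Fin r) ℝ) (hU : Uᵀ * U = 1)
    (Q : Matrix (Fin r) (Fin t) ℝ) (hQ : Qᵀ * Q = XTᵀ * PRᵀ * PR * XT) :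
    (XS * (XSᵀ * XS)⁻¹ * XSᵀ * XT + PRᵀ * U * Q)ᵀ *
        (XS * (XSᵀ * XS)⁻¹ * XSᵀ * XT + PRᵀ * U * Q) = XTᵀ * XT := by
  set H : Matrix (Fin n) (Fin n) ℝ := XS * (XSᵀ * XS)⁻¹ * XSᵀ with hH
  have hdet : IsUnit (XSᵀ * XS).det := (Matrix.isUnit_iff_isUnit_det _).mp hXS
  have hHT : Hᵀ = H := by
    rw [hH, Matrix.transpose_mul, Matrix.transpose_mul, Matrix.transpose_nonsing_inv,
      Matrix.transpose_mul, Matrix.transpose_transpose, Matrix.mul_assoc]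
  have hHH : H * H = H := by
    have key : (XSᵀ * XS)⁻¹ * (XSᵀ * XS) = 1 := Matrix.nonsing_inv_mul _ hdet
    calc H * H = XS * ((XSᵀ * XS)⁻¹ * (XSᵀ * XS) * ((XSᵀ * XS)⁻¹ * XSᵀ)) := by
          rw [hH]; simp only [Matrix.mul_assoc]
      _ = H := by rw [key, Matrix.one_mul, hH, Matrix.mul_assoc]
  have hPH : PR * H = 0 := by
    have h1 : PR * (PRᵀ * PR) = PR := by rw [← Matrix.mul_assoc, hP1, Matrix.one_mul]
    have h2 : PR * (1 - H) = PR := by rw [← hP2]; exact h1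
    rw [Matrix.mul_sub, Matrix.mul_one] at h2
    linear_combination (norm := noncomm_ring) -h2
  have hHP : H * PRᵀ = 0 := by
    have := congrArg Matrix.transpose hPH
    rwa [Matrix.transpose_mul, hHT, Matrix.transpose_zero] at this
  rw [Matrix.transpose_add, Matrix.add_mul, Matrix.mul_add, Matrix.mul_add]
  have hc1 : (XS * (XSᵀ * XS)⁻¹ * XSᵀ * XT)ᵀ * (PRᵀ * U * Q) = 0 := by
    have : (XS * (XSᵀ * XS)⁻¹ * XSᵀ * XT)ᵀ = XTᵀ * H := by
      rw [show XS * (XSᵀ * XS)⁻¹ * XSᵀ * XT = H * XT from rfl, Matrix.transpose_mul, hHT]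
    rw [this, Matrix.mul_assoc,
      show H * (PRᵀ * U * Q) = 0 by
        rw [← Matrix.mul_assoc, ← Matrix.mul_assoc, hHP, Matrix.zero_mul, Matrix.zero_mul],
      Matrix.mul_zero]
  have hc2 : (PRᵀ * U * Q)ᵀ * (XS * (XSᵀ * XS)⁻¹ * XSᵀ * XT) = 0 := by
    rw [show XS * (XSᵀ * XS)⁻¹ * XSᵀ * XT = H * XT from rfl, Matrix.transpose_mul,
      Matrix.transpose_mul, Matrix.transpose_transpose]
    rw [Matrix.mul_assoc, Matrix.mul_assoc, ← Matrix.mul_assoc PR, hPH, Matrix.zero_mul]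
    simp
  have hc3 : (XS * (XSᵀ * XS)⁻¹ * XSᵀ * XT)ᵀ * (XS * (XSᵀ * XS)⁻¹ * XSᵀ * XT)
      = XTᵀ * H * XT := by
    rw [show XS * (XSᵀ * XS)⁻¹ * XSᵀ * XT = H * XT from rfl, Matrix.transpose_mul, hHT,
      Matrix.mul_assoc, ← Matrix.mul_assoc H, hHH, ← Matrix.mul_assoc]
  have hc4 : (PRᵀ * U * Q)ᵀ * (PRᵀ * U * Q) = XTᵀ * (1 - H) * XT := by
    rw [Matrix.transpose_mul, Matrix.transpose_mul, Matrix.transpose_transpose]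
    have : Qᵀ * Uᵀ * (PR * (PRᵀ * (U * Q))) = Qᵀ * Q := by
      rw [← Matrix.mul_assoc PR, hP1, Matrix.one_mul, Matrix.mul_assoc Qᵀ,
        ← Matrix.mul_assoc Uᵀ, hU, Matrix.one_mul]
    calc Qᵀ * (Uᵀ * PR) * (PRᵀ * U * Q) = Qᵀ * Uᵀ * (PR * (PRᵀ * (U * Q))) := by
          simp only [Matrix.mul_assoc]
      _ = Qᵀ * Q := this
      _ = XTᵀ * PRᵀ * PR * XT := hQ
      _ = XTᵀ * (1 - H) * XT := by rw [Matrix.mul_assoc XTᵀ, hP2]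
  rw [hc1, hc2, hc3, hc4, Matrix.mul_sub, Matrix.mul_one, Matrix.sub_mul]
  abel
end

section
/- Let t, k, n be natural numbers with 1 ≤ k < t, and let λ be a real number with 0 < λ and k·λ ≤ 1/2. Let 𝒮 be the collection of all k-element subsets of a t-element set and N = (t choose k) its cardinality. Then N⁻²·Σ_{S₁∈𝒮} Σ_{S₂∈𝒮} (1 − λ·|S₁ ∩ S₂|)^{−n} − 1 ≤ exp(k²/(t−k)) · (1 − k/t + (k/t)·exp(2·n·λ))^k − 1. -/
open Finset

-- nat lemma: choose (t-j) (k-j) * t^j ≤ choose t k * k^j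
lemma aux_choose (t k : ℕ) (hkt : k ≤ t) :
    ∀ j, j ≤ k → Nat.choose (t - j) (k - j) * t ^ j ≤ Nat.choose t k * k ^ j := by
  intro j
  induction j with
  | zero => simp
  | succ j ih =>
    intro hjk
    have hj : j ≤ k := Nat.le_of_succ_le hjk
    have ih' := ih hj
    have hjt : j < t := lt_of_lt_of_le hjk hkt
    -- (t-j) * choose (t-j-1) (k-j-1) = choose (t-j) (k-j) * (k-j)
    have key : (t - j) * Nat.choose (t - (j+1)) (k - (j+1)) = Nat.choose (t - j) (k - j) * (k - j) := by
      have h1 : t - j = (t - (j+1)) + 1 := by omega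
      have h2 : k - j = (k - (j+1)) + 1 := by omega
      rw [h1, h2]
      exact Nat.add_one_mul_choose_eq _ _
    -- t * (k-j) ≤ k * (t-j)
    have hmul : t * (k - j) ≤ k * (t - j) := by
      have h1 : j ≤ k := hj
      have h2 : j ≤ t := hjt.le
      zify [h1, h2]
      nlinarith [mul_le_mul_of_nonneg_right (by exact_mod_cast hkt : (k:ℤ) ≤ t) (by positivity : (0:ℤ) ≤ (j:ℤ))]
    have step : Nat.choose (t - (j+1)) (k - (j+1)) * t ≤ Nat.choose (t - j) (k - j) * k := by
      have hpos : 0 < t - j := by omega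
      have : (Nat.choose (t - (j+1)) (k - (j+1)) * t) * (t - j)
          ≤ (Nat.choose (t - j) (k - j) * k) * (t - j) := by
        have e1 : t - (j+1) = t - j - 1 := by omega
        have e2 : k - (j+1) = k - j - 1 := by omega
        calc (Nat.choose (t - (j+1)) (k - (j+1)) * t) * (t - j)
            = ((t - j) * Nat.choose (t - (j+1)) (k - (j+1))) * t := by ring
          _ = (Nat.choose (t - j) (k - j) * (k - j)) * t := by rw [key]
          _ = Nat.choose (t - j) (k - j) * (t * (k - j)) := by ring
          _ ≤ Nat.choose (t - j) (k - j) * (k * (t - j)) := Nat.mul_le_mul_left _ hmul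
          _ = (Nat.choose (t - j) (k - j) * k) * (t - j) := by ring
      exact Nat.le_of_mul_le_mul_right this hpos
    calc Nat.choose (t - (j+1)) (k - (j+1)) * t ^ (j+1)
        = (Nat.choose (t - (j+1)) (k - (j+1)) * t) * t ^ j := by ring
      _ ≤ (Nat.choose (t - j) (k - j) * k) * t ^ j := Nat.mul_le_mul_right _ step
      _ = (Nat.choose (t - j) (k - j) * t ^ j) * k := by ring
      _ ≤ (Nat.choose t k * k ^ j) * k := Nat.mul_le_mul_right _ ih'
      _ = Nat.choose t k * k ^ (j+1) := by ring

-- count of k-supersets of T in Fin t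
lemma aux_count (t k : ℕ) (T : Finset (Fin t)) (hT : T.card ≤ k) :
    ((powersetCard k (univ : Finset (Fin t))).filter (fun S => T ⊆ S)).card
      = Nat.choose (t - T.card) (k - T.card) := by
  have hcard : (univ \ T : Finset (Fin t)).card = t - T.card := by
    rw [card_sdiff_of_subset (subset_univ T), card_univ, Fintype.card_fin]
  rw [← hcard, ← card_powersetCard]
  apply Finset.card_bij' (fun S _ => S \ T) (fun U _ => U ∪ T)
  · intro S hS
    simp only [mem_filter, mem_powersetCard] at hS
    simp only [mem_powersetCard]
    exact ⟨sdiff_subset_sdiff hS.1.1 (le_refl _), by rw [card_sdiff_of_subset hS.2, hS.1.2]⟩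
  · intro U hU
    simp only [mem_powersetCard] at hU
    have hdisj : Disjoint U T := disjoint_of_subset_left hU.1 sdiff_disjoint
    simp only [mem_filter, mem_powersetCard]
    refine ⟨⟨subset_univ _, ?_⟩, subset_union_right⟩
    rw [card_union_of_disjoint hdisj, hU.2]
    omega
  · intro S hS
    simp only [mem_filter, mem_powersetCard] at hS
    exact sdiff_union_of_subset hS.2
  · intro U hU
    simp only [mem_powersetCard] at hU
    have hdisj : Disjoint U T := disjoint_of_subset_left hU.1 sdiff_disjoint
    rw [union_sdiff_cancel_right hdisj]

-- sum over powerset of x^card = (x+1)^card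
lemma aux_powsum {α : Type*} (s : Finset α) (x : ℝ) :
    ∑ T ∈ s.powerset, x ^ T.card = (x + 1) ^ s.card := by
  have h := Finset.sum_powerset_apply_card (fun m => x ^ m) (x := s)
  rw [h, add_pow]
  simp [mul_comm]

lemma aux_zpow (n : ℕ) (x : ℝ) (hx0 : 0 ≤ x) (hx : x ≤ 1/2) :
    (1 - x) ^ (-(n:ℤ)) ≤ Real.exp (2*x) ^ n := by
  have hpos : 0 < 1 - x := by linarith
  have hinv : (1 - x)⁻¹ ≤ Real.exp (2*x) := by
    have h1 : (1 - x)⁻¹ ≤ 1 + 2*x := by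
      rw [inv_eq_one_div, div_le_iff₀ hpos]; nlinarith
    have h2 : 1 + 2*x ≤ Real.exp (2*x) := by
      have := Real.add_one_le_exp (2*x); linarith
    linarith
  calc (1-x)^(-(n:ℤ)) = ((1-x)⁻¹)^n := by
        rw [zpow_neg, zpow_natCast, ← inv_pow]
    _ ≤ Real.exp (2*x) ^ n := pow_le_pow_left₀ (inv_nonneg.mpr hpos.le) hinv n

theorem stmt_9 (t k n : ℕ) (hk1 : 1 ≤ k) (hkt : k < t)
    (l : ℝ) (hl : 0 < l) (hkl : (k : ℝ) * l ≤ 1 / 2) :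
    ((t.choose k : ℝ))⁻¹ ^ 2 *
        (∑ S₁ ∈ Finset.powersetCard k (Finset.univ : Finset (Fin t)),
          ∑ S₂ ∈ Finset.powersetCard k (Finset.univ : Finset (Fin t)),
            (1 - l * ((S₁ ∩ S₂).card : ℝ)) ^ (-(n : ℤ))) - 1
      ≤ Real.exp ((k : ℝ) ^ 2 / ((t : ℝ) - (k : ℝ))) *
          (1 - (k : ℝ) / (t : ℝ) + ((k : ℝ) / (t : ℝ)) * Real.exp (2 * (n : ℝ) * l)) ^ k
        - 1 := by
  have ht0 : (0:ℝ) < (t:ℝ) := by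
    exact_mod_cast Nat.lt_of_lt_of_le (Nat.lt_of_lt_of_le Nat.zero_lt_one hk1) hkt.le
  have hN : (0:ℝ) < (t.choose k : ℝ) := by exact_mod_cast Nat.choose_pos hkt.le
  set a : ℝ := Real.exp (2 * (n:ℝ) * l) with ha_def
  have ha1 : (1:ℝ) ≤ a := Real.one_le_exp (by positivity)
  have hb0 : (0:ℝ) ≤ a - 1 := by linarith
  have hbase1 : (1:ℝ) ≤ 1 - (k:ℝ)/(t:ℝ) + ((k:ℝ)/(t:ℝ)) * a := by
    have hp0 : (0:ℝ) ≤ (k:ℝ)/(t:ℝ) := by positivity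
    nlinarith
  -- casted choose bound
  have hreal : ∀ j : ℕ, j ≤ k →
      ((t - j).choose (k - j) : ℝ) ≤ (t.choose k : ℝ) * ((k:ℝ)/(t:ℝ))^j := by
    intro j hj
    have h := aux_choose t k hkt.le j hj
    have h' : ((t - j).choose (k - j) : ℝ) * (t:ℝ)^j ≤ (t.choose k : ℝ) * (k:ℝ)^j := by
      exact_mod_cast h
    have htj : (0:ℝ) < (t:ℝ)^j := pow_pos ht0 j
    rw [div_pow, ← mul_div_assoc, le_div_iff₀ htj]
    linarith [h']
  -- per S₁ bound
  have step : ∀ S₁ ∈ Finset.powersetCard k (Finset.univ : Finset (Fin t)),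
      (∑ S₂ ∈ Finset.powersetCard k (Finset.univ : Finset (Fin t)),
        (1 - l * ((S₁ ∩ S₂).card : ℝ)) ^ (-(n : ℤ)))
      ≤ (t.choose k : ℝ) * (1 - (k:ℝ)/(t:ℝ) + ((k:ℝ)/(t:ℝ)) * a)^k := by
    intro S₁ hS₁
    have hS₁card : S₁.card = k := (mem_powersetCard.mp hS₁).2
    have step1 : (∑ S₂ ∈ Finset.powersetCard k (Finset.univ : Finset (Fin t)),
        (1 - l * ((S₁ ∩ S₂).card : ℝ)) ^ (-(n : ℤ)))
        ≤ ∑ S₂ ∈ Finset.powersetCard k (Finset.univ : Finset (Fin t)),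
          a ^ ((S₁ ∩ S₂).card) := by
      refine Finset.sum_le_sum fun S₂ _ => ?_
      have hcle : ((S₁ ∩ S₂).card : ℝ) ≤ (k:ℝ) := by
        exact_mod_cast (card_le_card inter_subset_left).trans hS₁card.le
      have hc0 : (0:ℝ) ≤ ((S₁ ∩ S₂).card : ℝ) := Nat.cast_nonneg _
      have hxle : l * ((S₁ ∩ S₂).card : ℝ) ≤ 1/2 := by
        calc l * ((S₁ ∩ S₂).card : ℝ) ≤ l * (k:ℝ) :=
              mul_le_mul_of_nonneg_left hcle hl.le
          _ = (k:ℝ) * l := mul_comm _ _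
          _ ≤ 1/2 := hkl
      calc (1 - l * ((S₁ ∩ S₂).card : ℝ)) ^ (-(n : ℤ))
          ≤ Real.exp (2 * (l * ((S₁ ∩ S₂).card : ℝ))) ^ n :=
            aux_zpow n _ (by positivity) hxle
        _ = a ^ ((S₁ ∩ S₂).card) := by
            rw [ha_def, ← Real.exp_nat_mul, ← Real.exp_nat_mul]
            congr 1; ring
    refine step1.trans ?_
    -- expand a^card
    have expand : ∀ S₂ ∈ Finset.powersetCard k (Finset.univ : Finset (Fin t)),
        a ^ ((S₁ ∩ S₂).card)
        = ∑ T ∈ S₁.powerset, (if T ⊆ S₂ then (a-1)^T.card else 0) := by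
      intro S₂ _
      rw [← Finset.sum_filter]
      have hps : S₁.powerset.filter (fun T => T ⊆ S₂) = (S₁ ∩ S₂).powerset := by
        ext T
        simp only [Finset.mem_filter, Finset.mem_powerset, Finset.subset_inter_iff]
      rw [hps, aux_powsum, sub_add_cancel]
    calc (∑ S₂ ∈ Finset.powersetCard k (Finset.univ : Finset (Fin t)),
          a ^ ((S₁ ∩ S₂).card))
        = ∑ S₂ ∈ Finset.powersetCard k (Finset.univ : Finset (Fin t)),
            ∑ T ∈ S₁.powerset, (if T ⊆ S₂ then (a-1)^T.card else 0) :=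
          Finset.sum_congr rfl expand
      _ = ∑ T ∈ S₁.powerset,
            ∑ S₂ ∈ Finset.powersetCard k (Finset.univ : Finset (Fin t)),
              (if T ⊆ S₂ then (a-1)^T.card else 0) := Finset.sum_comm
      _ = ∑ T ∈ S₁.powerset,
            (((Finset.powersetCard k (Finset.univ : Finset (Fin t))).filter
                (fun S₂ => T ⊆ S₂)).card : ℝ) * (a-1)^T.card := by
          refine Finset.sum_congr rfl fun T _ => ?_
          rw [← Finset.sum_filter, Finset.sum_const, nsmul_eq_mul]
      _ = ∑ T ∈ S₁.powerset, ((t - T.card).choose (k - T.card) : ℝ) * (a-1)^T.card := by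
          refine Finset.sum_congr rfl fun T hT => ?_
          rw [aux_count t k T ((card_le_card (mem_powerset.mp hT)).trans hS₁card.le)]
      _ ≤ ∑ T ∈ S₁.powerset, ((t.choose k : ℝ) * ((k:ℝ)/(t:ℝ))^T.card) * (a-1)^T.card := by
          refine Finset.sum_le_sum fun T hT => ?_
          exact mul_le_mul_of_nonneg_right
            (hreal T.card ((card_le_card (mem_powerset.mp hT)).trans hS₁card.le))
            (pow_nonneg hb0 _)
      _ = (t.choose k : ℝ) * ∑ T ∈ S₁.powerset, ((a-1) * ((k:ℝ)/(t:ℝ)))^T.card := by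
          rw [Finset.mul_sum]
          refine Finset.sum_congr rfl fun T _ => ?_
          rw [mul_pow]; ring
      _ = (t.choose k : ℝ) * ((a-1) * ((k:ℝ)/(t:ℝ)) + 1)^k := by
          rw [aux_powsum, hS₁card]
      _ = (t.choose k : ℝ) * (1 - (k:ℝ)/(t:ℝ) + ((k:ℝ)/(t:ℝ)) * a)^k := by
          congr 1; ring
  -- assemble
  have hcard : ((Finset.powersetCard k (Finset.univ : Finset (Fin t))).card : ℝ)
      = (t.choose k : ℝ) := by
    rw [card_powersetCard, card_univ, Fintype.card_fin]
  have key : (∑ S₁ ∈ Finset.powersetCard k (Finset.univ : Finset (Fin t)),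
      ∑ S₂ ∈ Finset.powersetCard k (Finset.univ : Finset (Fin t)),
        (1 - l * ((S₁ ∩ S₂).card : ℝ)) ^ (-(n : ℤ)))
      ≤ (t.choose k : ℝ)^2 * (1 - (k:ℝ)/(t:ℝ) + ((k:ℝ)/(t:ℝ)) * a)^k := by
    calc (∑ S₁ ∈ Finset.powersetCard k (Finset.univ : Finset (Fin t)),
        ∑ S₂ ∈ Finset.powersetCard k (Finset.univ : Finset (Fin t)),
          (1 - l * ((S₁ ∩ S₂).card : ℝ)) ^ (-(n : ℤ)))
        ≤ ∑ _S₁ ∈ Finset.powersetCard k (Finset.univ : Finset (Fin t)),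
            (t.choose k : ℝ) * (1 - (k:ℝ)/(t:ℝ) + ((k:ℝ)/(t:ℝ)) * a)^k :=
          Finset.sum_le_sum step
      _ = (t.choose k : ℝ)^2 * (1 - (k:ℝ)/(t:ℝ) + ((k:ℝ)/(t:ℝ)) * a)^k := by
          rw [Finset.sum_const, nsmul_eq_mul, hcard]; ring
  have hmain : ((t.choose k : ℝ))⁻¹ ^ 2 *
      (∑ S₁ ∈ Finset.powersetCard k (Finset.univ : Finset (Fin t)),
        ∑ S₂ ∈ Finset.powersetCard k (Finset.univ : Finset (Fin t)),
          (1 - l * ((S₁ ∩ S₂).card : ℝ)) ^ (-(n : ℤ)))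
      ≤ (1 - (k:ℝ)/(t:ℝ) + ((k:ℝ)/(t:ℝ)) * a)^k := by
    have hinv : (0:ℝ) ≤ ((t.choose k : ℝ))⁻¹ ^ 2 := by positivity
    calc ((t.choose k : ℝ))⁻¹ ^ 2 * _ ≤ ((t.choose k : ℝ))⁻¹ ^ 2 *
          ((t.choose k : ℝ)^2 * (1 - (k:ℝ)/(t:ℝ) + ((k:ℝ)/(t:ℝ)) * a)^k) :=
          mul_le_mul_of_nonneg_left key hinv
      _ = (1 - (k:ℝ)/(t:ℝ) + ((k:ℝ)/(t:ℝ)) * a)^k := by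
          field_simp
  have hexp1 : (1:ℝ) ≤ Real.exp ((k : ℝ) ^ 2 / ((t : ℝ) - (k : ℝ))) := by
    apply Real.one_le_exp
    have : (0:ℝ) < (t:ℝ) - (k:ℝ) := by
      have : (k:ℝ) < (t:ℝ) := by exact_mod_cast hkt
      linarith
    positivity
  have hbpow : (0:ℝ) ≤ (1 - (k:ℝ)/(t:ℝ) + ((k:ℝ)/(t:ℝ)) * a)^k :=
    pow_nonneg (by linarith) k
  nlinarith [mul_le_mul_of_nonneg_right hexp1 hbpow]
end

section
/- Let g be a natural number with g ≥ 1 and q > 0 a real number. Let δ_1, …, δ_g be nonnegative reals and ℓ_1, …, ℓ_g positive reals. Define b_0 = 0 and b_k = b_{k−1} + (q/g)·δ_k for 1 ≤ k ≤ g, and assume b_g ≤ 1. Define Y : ℝ → ℝ by Y(x) = g/(q·ℓ_k) if x ∈ (b_{k−1}, b_k] for some 1 ≤ k ≤ g, and Y(x) = 1/(2q) otherwise. Define T : ℝ → ℝ by T(z) = g/⌈g/z⌉ if z ≥ 1 and T(z) = 0 if z < 1, where ⌈·⌉ denotes the ceiling. If Σ_{k : ℓ_k ≤ g} δ_k/⌈ℓ_k⌉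 ≤ 1, then for X uniformly distributed on (0,1], the expectation satisfies E[T(q·Y(X))] ≤ q. -/
/-!
On `(0, 1]` the function `q * Y` equals `g / ℓ k` on the `k`-th interval `(b (k-1), b k]`,
of length `q δ k / g`, and equals `1 / 2` elsewhere, where `T` vanishes. Since
`T (g / ℓ) = g / ⌈ℓ⌉` for `ℓ ≤ g` and `0` otherwise, the integral is exactly
`q * ∑_{ℓ k ≤ g} δ k / ⌈ℓ k⌉`, which is at most `q`.
-/

open MeasureTheory Finset

section ConsecutiveIntervals

variable {α : Type*} [Preorder α] {b : ℕ → α} {n : ℕ}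

lemma monotoneOn_Iic_of_pred_le (h : ∀ k ∈ Icc 1 n, b (k - 1) ≤ b k) :
    MonotoneOn b (Set.Iic n) :=
  monotoneOn_of_le_succ Set.ordConnected_Iic fun a _ _ ha =>
    h (a + 1) (mem_Icc.mpr ⟨le_add_self, ha⟩)

lemma pairwise_disjoint_Ioc_pred_of_monotoneOn (hb : MonotoneOn b (Set.Iic n)) :
    (↑(Icc 1 n) : Set ℕ).PairwiseDisjoint fun k => Set.Ioc (b (k - 1)) (b k) := by
  have key : ∀ j ∈ Icc 1 n, ∀ k ∈ Icc 1 n, j < k →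
      Disjoint (Set.Ioc (b (j - 1)) (b j)) (Set.Ioc (b (k - 1)) (b k)) := by
    intro j hj k hk hjk
    rw [mem_Icc] at hj hk
    exact Set.Ioc_disjoint_Ioc_of_le <|
      hb (Set.mem_Iic.mpr hj.2) (Set.mem_Iic.mpr (by omega)) (by omega)
  intro j hj k hk hne
  rcases lt_or_gt_of_ne hne with hjk | hkj
  · exact key j hj k hk hjk
  · exact (key k hk j hj hkj).symm

lemma biUnion_Ioc_pred_subset_of_monotoneOn (hb : MonotoneOn b (Set.Iic n)) :
    ⋃ k ∈ Icc 1 n, Set.Ioc (b (k - 1)) (b k) ⊆ Set.Ioc (b 0) (b n) := by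
  refine Set.iUnion₂_subset fun k hk => Set.Ioc_subset_Ioc ?_ ?_ <;> rw [mem_Icc] at hk
  · exact hb (Set.mem_Iic.mpr (Nat.zero_le n)) (Set.mem_Iic.mpr (by omega)) (Nat.zero_le _)
  · exact hb (Set.mem_Iic.mpr hk.2) (Set.mem_Iic.mpr le_rfl) hk.2

end ConsecutiveIntervals

lemma setIntegral_biUnion_Ioc_of_eqOn {ι : Type*} (s : Finset ι) {lo hi c : ι → ℝ}
    {f : ℝ → ℝ} (hle : ∀ i ∈ s, lo i ≤ hi i)
    (hdisj : (↑s : Set ι).PairwiseDisjoint fun i => Set.Ioc (lo i) (hi i))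
    (hf : ∀ i ∈ s, Set.EqOn f (fun _ => c i) (Set.Ioc (lo i) (hi i))) :
    ∫ x in ⋃ i ∈ s, Set.Ioc (lo i) (hi i), f x = ∑ i ∈ s, c i * (hi i - lo i) := by
  have hint : ∀ i ∈ s, IntegrableOn f (Set.Ioc (lo i) (hi i)) :=
    fun i hi => (integrableOn_const measure_Ioc_lt_top.ne).congr_fun (hf i hi).symm
      measurableSet_Ioc
  rw [integral_biUnion_finset s (fun _ _ => measurableSet_Ioc) hdisj hint]
  refine sum_congr rfl fun i hi => ?_
  rw [setIntegral_congr_fun measurableSet_Ioc (hf i hi), setIntegral_const,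
    Real.volume_real_Ioc_of_le (hle i hi), smul_eq_mul, mul_comm]

noncomputable def ebhTruncation (g : ℕ) (z : ℝ) : ℝ :=
  if 1 ≤ z then (g : ℝ) / ((⌈(g : ℝ) / z⌉ : ℤ) : ℝ) else 0

lemma ebhTruncation_div {g : ℕ} {ℓ : ℝ} (hℓ : 0 < ℓ) :
    ebhTruncation g (g / ℓ) = if ℓ ≤ g then (g : ℝ) / ((⌈ℓ⌉ : ℤ) : ℝ) else 0 := by
  unfold ebhTruncation
  by_cases h : ℓ ≤ g
  · have hg : (g : ℝ) ≠ 0 := (hℓ.trans_le h).ne'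
    rw [if_pos ((one_le_div hℓ).mpr h), if_pos h, div_div_cancel₀ hg]
  · rw [if_neg (not_le.mpr ((div_lt_one hℓ).mpr (not_le.mp h))), if_neg h]

lemma ebhTruncation_div_mul {g : ℕ} {ℓ : ℝ} (hℓ : 0 < ℓ) (q δ : ℝ) :
    ebhTruncation g (g / ℓ) * (q / g * δ) = q * if ℓ ≤ g then δ / ((⌈ℓ⌉ : ℤ) : ℝ) else 0 := by
  rw [ebhTruncation_div hℓ]
  split_ifs with h
  · have : (g : ℝ) ≠ 0 := (hℓ.trans_le h).ne'
    field_simp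
  · simp

theorem stmt_10_general (g : ℕ) (q : ℝ) (hq : 0 < q)
    (δ ℓ : ℕ → ℝ)
    (hδ : ∀ k ∈ Finset.Icc 1 g, 0 ≤ δ k)
    (hℓ : ∀ k ∈ Finset.Icc 1 g, 0 < ℓ k)
    (b : ℕ → ℝ) (hb0 : b 0 = 0)
    (hb : ∀ k ∈ Finset.Icc 1 g, b k = b (k - 1) + (q / g) * δ k)
    (hbg : b g ≤ 1)
    (Y : ℝ → ℝ)
    (hY1 : ∀ k ∈ Finset.Icc 1 g, ∀ x ∈ Set.Ioc (b (k - 1)) (b k), Y x = g / (q * ℓ k))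
    (hY2 : ∀ x : ℝ, (∀ k ∈ Finset.Icc 1 g, x ∉ Set.Ioc (b (k - 1)) (b k)) →
      Y x = 1 / (2 * q))
    (T : ℝ → ℝ)
    (hT : ∀ z : ℝ, T z = if 1 ≤ z then (g : ℝ) / ((⌈(g : ℝ) / z⌉ : ℤ) : ℝ) else 0)
    (hsum : ∑ k ∈ (Finset.Icc 1 g).filter (fun k => ℓ k ≤ (g : ℝ)),
        δ k / ((⌈ℓ k⌉ : ℤ) : ℝ) ≤ 1) :
    ∫ x in Set.Ioc (0 : ℝ) 1, T (q * Y x) ≤ q := by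
  obtain rfl : T = ebhTruncation g := funext hT
  have hstep : ∀ k ∈ Icc 1 g, b (k - 1) ≤ b k := fun k hk => by
    rw [hb k hk]
    exact le_add_of_nonneg_right (mul_nonneg (by positivity) (hδ k hk))
  have hmono := monotoneOn_Iic_of_pred_le hstep
  have hsub : ⋃ k ∈ Icc 1 g, Set.Ioc (b (k - 1)) (b k) ⊆ Set.Ioc 0 1 :=
    (biUnion_Ioc_pred_subset_of_monotoneOn hmono).trans (Set.Ioc_subset_Ioc hb0.ge hbg)
  have hval : ∀ k ∈ Icc 1 g, Set.EqOn (fun x => ebhTruncation g (q * Y x))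
      (fun _ => ebhTruncation g (g / ℓ k)) (Set.Ioc (b (k - 1)) (b k)) := fun k hk x hx => by
    have hqY : q * Y x = g / ℓ k := by
      rw [hY1 k hk x hx]; field_simp [hq.ne', (hℓ k hk).ne']
    simp only [hqY]
  have hzero : ∀ x ∈ Set.Ioc (0 : ℝ) 1 \ ⋃ k ∈ Icc 1 g, Set.Ioc (b (k - 1)) (b k),
      ebhTruncation g (q * Y x) = 0 := fun x hx => by
    have hqY : q * Y x = 1 / 2 := by
      rw [hY2 x fun k hk hxk => hx.2 (Set.mem_biUnion hk hxk)]; field_simp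
    rw [hqY, ebhTruncation, if_neg (by norm_num)]
  calc ∫ x in Set.Ioc (0 : ℝ) 1, ebhTruncation g (q * Y x)
      = ∫ x in ⋃ k ∈ Icc 1 g, Set.Ioc (b (k - 1)) (b k), ebhTruncation g (q * Y x) :=
        setIntegral_eq_of_subset_of_forall_sdiff_eq_zero measurableSet_Ioc hsub hzero
    _ = ∑ k ∈ Icc 1 g, ebhTruncation g (g / ℓ k) * (b k - b (k - 1)) :=
        setIntegral_biUnion_Ioc_of_eqOn _ hstep (pairwise_disjoint_Ioc_pred_of_monotoneOn hmono)
          hval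
    _ = q * ∑ k ∈ (Icc 1 g).filter (fun k => ℓ k ≤ (g : ℝ)), δ k / ((⌈ℓ k⌉ : ℤ) : ℝ) := by
      rw [mul_sum, sum_filter]
      refine sum_congr rfl fun k hk => ?_
      rw [hb k hk, add_sub_cancel_left, ebhTruncation_div_mul (hℓ k hk), mul_ite, mul_zero]
    _ ≤ q := mul_le_of_le_one_right hq.le hsum

theorem stmt_10 (g : ℕ) (hg : 1 ≤ g) (q : ℝ) (hq : 0 < q)
    (δ ℓ : ℕ → ℝ)
    (hδ : ∀ k ∈ Finset.Icc 1 g, 0 ≤ δ k)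
    (hℓ : ∀ k ∈ Finset.Icc 1 g, 0 < ℓ k)
    (b : ℕ → ℝ) (hb0 : b 0 = 0)
    (hb : ∀ k ∈ Finset.Icc 1 g, b k = b (k - 1) + (q / g) * δ k)
    (hbg : b g ≤ 1)
    (Y : ℝ → ℝ)
    (hY1 : ∀ k ∈ Finset.Icc 1 g, ∀ x ∈ Set.Ioc (b (k - 1)) (b k), Y x = g / (q * ℓ k))
    (hY2 : ∀ x : ℝ, (∀ k ∈ Finset.Icc 1 g, x ∉ Set.Ioc (b (k - 1)) (b k)) →
      Y x = 1 / (2 * q))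
    (T : ℝ → ℝ)
    (hT : ∀ z : ℝ, T z = if 1 ≤ z then (g : ℝ) / ((⌈(g : ℝ) / z⌉ : ℤ) : ℝ) else 0)
    (hsum : ∑ k ∈ (Finset.Icc 1 g).filter (fun k => ℓ k ≤ (g : ℝ)),
        δ k / ((⌈ℓ k⌉ : ℤ) : ℝ) ≤ 1) :
    ∫ x in Set.Ioc (0 : ℝ) 1, T (q * Y x) ≤ q :=
  stmt_10_general g q hq δ ℓ hδ hℓ b hb0 hb hbg Y hY1 hY2 T hT hsum
end

section
/- Let E be a measurable space, μ a probability measure on E, and F, G Markov kernels from E to E such that (μ ⊗ F).map Prod.swap = μ ⊗ G, where μ ⊗ κ denotes the composition-product measure on E × E (first coordinate drawn from μ, second from κ applied to the first). Then the measure μ ⊗ (G ∘ F) is symmetric under swapping the two coordinates: (μ ⊗ (G ∘ F)).map Prod.swap = μ ⊗ (G ∘ F), where G ∘ F denotes the kernel composition that applies F first and then G. -/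
open MeasureTheory ProbabilityTheory

theorem stmt_14 {E : Type*} [MeasurableSpace E] (μ : Measure E) [IsProbabilityMeasure μ]
    (F G : Kernel E E) [IsMarkovKernel F] [IsMarkovKernel G]
    (h : (μ.compProd F).map Prod.swap = μ.compProd G) :
    (μ.compProd (G ∘ₖ F)).map Prod.swap = μ.compProd (G ∘ₖ F) := by
  have hswap : Measurable (Prod.swap : E × E → E × E) := measurable_swap
  -- transfer integrals along h
  have hint : ∀ g : E × E → ENNReal, Measurable g →
      ∫⁻ p, g p ∂(μ.compProd F) = ∫⁻ p, g (Prod.swap p) ∂(μ.compProd G) := by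
    intro g hg
    rw [← h, lintegral_map (f := fun p => g (Prod.swap p)) (hg.comp hswap) hswap]
    simp
  -- key computation: integrals against μ ⊗ (G ∘ₖ F) reduce to two independent G-draws
  have key : ∀ g : E × E → ENNReal, Measurable g →
      ∫⁻ p, g p ∂(μ.compProd (G ∘ₖ F))
        = ∫⁻ x, ∫⁻ y, ∫⁻ z, g (y, z) ∂(G x) ∂(G x) ∂μ := by
    intro g hg
    rw [Measure.lintegral_compProd hg]
    have hΦ : Measurable (fun p : E × E => ∫⁻ z, g (p.1, z) ∂(G p.2)) := by
      have hm : Measurable (Function.uncurry fun (p : E × E) z => g (p.1, z)) :=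
        hg.comp ((measurable_fst.comp measurable_fst).prodMk measurable_snd)
      have := Measurable.lintegral_kernel_prod_right
        (κ := G.comap Prod.snd measurable_snd) hm
      simpa [Kernel.comap_apply] using this
    calc ∫⁻ x, ∫⁻ y, g (x, y) ∂(G ∘ₖ F) x ∂μ
        = ∫⁻ x, ∫⁻ y, ∫⁻ z, g (x, z) ∂(G y) ∂(F x) ∂μ := by
          refine lintegral_congr fun x => ?_
          exact Kernel.lintegral_comp G F x (hg.comp measurable_prodMk_left)
      _ = ∫⁻ p, (fun p : E × E => ∫⁻ z, g (p.1, z) ∂(G p.2)) p ∂(μ.compProd F) := by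
          rw [Measure.lintegral_compProd hΦ]
      _ = ∫⁻ p, (fun p : E × E => ∫⁻ z, g (p.1, z) ∂(G p.2)) (Prod.swap p)
            ∂(μ.compProd G) := hint _ hΦ
      _ = ∫⁻ x, ∫⁻ y, ∫⁻ z, g (y, z) ∂(G x) ∂(G x) ∂μ := by
          rw [Measure.lintegral_compProd (f := fun p => ∫⁻ z, g ((Prod.swap p).1, z) ∂(G (Prod.swap p).2)) (hΦ.comp hswap)]
          simp
  ext s hs
  rw [Measure.map_apply hswap hs, ← lintegral_indicator_one (hswap hs),
    ← lintegral_indicator_one hs, key _ (measurable_one.indicator (hswap hs)),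
    key _ (measurable_one.indicator hs)]
  refine lintegral_congr fun x => ?_
  have hm : AEMeasurable (Function.uncurry fun (y z : E) =>
      Set.indicator s (1 : E × E → ENNReal) (z, y)) ((G x).prod (G x)) := by
    exact ((measurable_one.indicator hs).comp
      (measurable_snd.prodMk measurable_fst)).aemeasurable
  calc ∫⁻ y, ∫⁻ z, Set.indicator (Prod.swap ⁻¹' s) (1 : E × E → ENNReal) (y, z) ∂(G x) ∂(G x)
      = ∫⁻ y, ∫⁻ z, Set.indicator s (1 : E × E → ENNReal) (z, y) ∂(G x) ∂(G x) := by
        refine lintegral_congr fun y => lintegral_congr fun z => ?_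
        by_cases hmem : (z, y) ∈ s <;>
          simp [Set.indicator_apply, Set.mem_preimage, hmem]
    _ = ∫⁻ z, ∫⁻ y, Set.indicator s (1 : E × E → ENNReal) (z, y) ∂(G x) ∂(G x) :=
        lintegral_lintegral_swap hm
end

section
/- Let s and t be natural numbers, β : Fin s → ℝ, σ a real number with σ ≠ 0, ρ a real number, and δ₁, δ₂ : Fin t → ℝ. Consider the real matrices indexed by Unit ⊕ (Fin t ⊕ Fin s): let B be the 3×3 block matrix B = [[1/σ², 0, −βᵀ/σ²], [0, I_t, 0], [−β/σ², 0, I_s + β·βᵀ/σ²]], and for i = 1, 2 let D_i be the 3×3 block matrix whose (1,2) block is the 1×t row ρ·δᵢᵀ, whose (2,1) block is the t×1 column ρ·δᵢ, and all of whose other blocks are zero. Then det(1 − B·D₁·B·D₂) = (1 − (ρ²/σ²)·Σ_j δ₁(j)·δ₂(j))². -/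
open Matrix

lemma aux_det (t : ℕ) (k : ℝ) (u v : Fin t → ℝ) :
    Matrix.det (1 - k • Matrix.vecMulVec u v) = 1 - k * ∑ j, u j * v j := by
  have h : (1 - k • Matrix.vecMulVec u v)
      = 1 + Matrix.replicateCol Unit (fun i => -k * u i) * Matrix.replicateRow Unit v := by
    ext i j
    simp [Matrix.vecMulVec, Matrix.mul_apply, Matrix.replicateCol, Matrix.replicateRow,
      Matrix.one_apply, sub_eq_add_neg]
    ring
  rw [h, Matrix.det_one_add_replicateCol_mul_replicateRow]
  have : v ⬝ᵥ (fun i => -k * u i) = -(k * ∑ j, u j * v j) := by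
    simp [dotProduct, Finset.mul_sum]
    apply Finset.sum_congr rfl
    intros; ring
  rw [this]; ring

theorem stmt_17 (s t : ℕ) (β : Fin s → ℝ) (σ : ℝ) (hσ : σ ≠ 0) (ρ : ℝ)
    (δ₁ δ₂ : Fin t → ℝ) :
    let B : Matrix (Unit ⊕ (Fin t ⊕ Fin s)) (Unit ⊕ (Fin t ⊕ Fin s)) ℝ :=
      Matrix.fromBlocks
        (Matrix.of fun _ _ => 1 / σ ^ 2)
        (Matrix.of fun _ j => Sum.elim (fun _ => (0 : ℝ)) (fun i => -β i / σ ^ 2) j)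
        (Matrix.of fun i _ => Sum.elim (fun _ => (0 : ℝ)) (fun i => -β i / σ ^ 2) i)
        (Matrix.fromBlocks 1 0 0 (1 + (σ ^ 2)⁻¹ • Matrix.vecMulVec β β))
    let D : (Fin t → ℝ) → Matrix (Unit ⊕ (Fin t ⊕ Fin s)) (Unit ⊕ (Fin t ⊕ Fin s)) ℝ :=
      fun δ =>
        Matrix.fromBlocks 0
          (Matrix.of fun _ j => Sum.elim (fun i => ρ * δ i) (fun _ => (0 : ℝ)) j)
          (Matrix.of fun i _ => Sum.elim (fun i => ρ * δ i) (fun _ => (0 : ℝ)) i)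
          0
    Matrix.det (1 - B * D δ₁ * B * D δ₂)
      = (1 - (ρ ^ 2 / σ ^ 2) * ∑ j, δ₁ j * δ₂ j) ^ 2 := by
  intro B D
  set c : ℝ := ρ ^ 2 / σ ^ 2 * ∑ j, δ₁ j * δ₂ j with hc
  -- explicit form of B * D δ
  set E : (Fin t → ℝ) → Matrix (Unit ⊕ (Fin t ⊕ Fin s)) (Unit ⊕ (Fin t ⊕ Fin s)) ℝ :=
    fun δ =>
      Matrix.fromBlocks 0
        (Matrix.of fun _ j => Sum.elim (fun i => ρ * δ i / σ ^ 2) (fun _ => (0 : ℝ)) j)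
        (Matrix.of fun i _ => Sum.elim (fun i => ρ * δ i) (fun _ => (0 : ℝ)) i)
        (Matrix.of fun i j =>
          Sum.elim (fun _ => (0 : ℝ))
            (fun i' => Sum.elim (fun j' => -β i' * (ρ * δ j') / σ ^ 2) (fun _ => (0 : ℝ)) j) i)
    with hE
  have h1 : ∀ δ, B * D δ = E δ := by
    intro δ
    ext (i | i | i) (j | j | j) <;>
      simp [B, D, E, Matrix.mul_apply, Fintype.sum_sum_type, Matrix.one_apply,
        Matrix.vecMulVec, Finset.mul_sum] <;> ring
  -- target block-triangular matrix
  have h2 : (1 : Matrix (Unit ⊕ (Fin t ⊕ Fin s)) (Unit ⊕ (Fin t ⊕ Fin s)) ℝ) - E δ₁ * E δ₂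
      = Matrix.fromBlocks (Matrix.of fun _ _ => 1 - c) 0
          (Matrix.of fun i _ => Sum.elim (fun _ => (0 : ℝ)) (fun i' => β i' * c) i)
          (Matrix.fromBlocks (1 - (ρ ^ 2 / σ ^ 2) • Matrix.vecMulVec δ₁ δ₂) 0 0 1) := by
    ext (i | i | i) (j | j | j) <;>
      simp [E, c, Matrix.mul_apply, Fintype.sum_sum_type, Matrix.one_apply,
        Matrix.vecMulVec, Finset.mul_sum] <;>
      first
        | ring1
        | (refine Finset.sum_congr rfl fun x _ => by ring)
        | (rw [← Finset.sum_neg_distrib]; exact Finset.sum_congr rfl fun x _ => by ring)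
  rw [mul_assoc, h1 δ₁, h1 δ₂, h2, Matrix.det_fromBlocks_zero₁₂,
    Matrix.det_fromBlocks_zero₁₂, Matrix.det_one, Matrix.det_unique, aux_det]
  simp [c]
  ring
end
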